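/- Let V be a 2-dimensional real inner product space with orthonormal basis {X, Z}, and let S : V → V be a linear map such that the symmetric bilinear condition α(X, SZ) = α(Z, SX) holds for a bilinear map α : V × V → W into a real vector space W with α(Z,Z) = 0 and α(X,X), α(X,Z) linearly independent. Then S = θ·I + φ·J for some reals θ, φ, where J(X) = Z and J(Z) = 0. -/

import Mathlib

/-!
Expand `S X = a X + b Z` and `S Z = c X + d Z` in the basis `{X, Z}`. Since `α(Z, Z) = 0`,
the condition `α(X, S Z) = α(Z, S X)` reads `c α(X, X) + d α(X, Z) = a α(X, Z)`, and the
independence of `α(X, X), α(X, Z)` forces `c = 0`, `d = a`; that is, `S = a I + b J`.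
-/

open Submodule

theorem LinearIndependent.span_pair_eq_top_of_finrank_eq_two {K V : Type*} [DivisionRing K]
    [AddCommGroup V] [Module K V] (hdim : Module.finrank K V = 2) {X Z : V}
    (h : LinearIndependent K ![X, Z]) : span K {X, Z} = ⊤ := by
  rw [← Matrix.range_cons_cons_empty X Z ![]]
  exact h.span_eq_top_of_card_eq_finrank (by simp [hdim])

theorem eq_zero_and_eq_of_apply_comm_of_isotropic {R M N : Type*} [CommRing R]
    [AddCommGroup M] [Module R M] [AddCommGroup N] [Module R N] (α : M →ₗ[R] M →ₗ[R] N)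
    {X Z : M} (hZX : α Z X = α X Z) (hZZ : α Z Z = 0)
    (hli : LinearIndependent R ![α X X, α X Z]) {a b c d : R}
    (h : α X (c • X + d • Z) = α Z (a • X + b • Z)) : c = 0 ∧ d = a := by
  simp only [map_add, map_smul, hZX, hZZ, smul_zero, add_zero] at h
  obtain ⟨hc, hda⟩ := LinearIndependent.pair_iff.mp hli c (d - a) (by rw [sub_smul, ← h]; abel)
  exact ⟨hc, sub_eq_zero.mp hda⟩

/-- determination of `S` from equation (48) in the proof of
Theorem 41: if `α` is a symmetric bilinear map with `α(Z,Z) = 0`,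
`α(X,X), α(X,Z)` linearly independent, and `S` satisfies `α(X,SZ) = α(Z,SX)`,
then `S = θ·I + φ·J` with `J(X) = Z`, `J(Z) = 0`. -/
theorem stmt17 {V W : Type*} [AddCommGroup V] [Module ℝ V]
    [AddCommGroup W] [Module ℝ W]
    (hdim : Module.finrank ℝ V = 2)
    (X Z : V) (hXZ : LinearIndependent ℝ ![X, Z])
    (α : V →ₗ[ℝ] V →ₗ[ℝ] W)
    (hsymm : ∀ u v : V, α u v = α v u)
    (hZZ : α Z Z = 0)
    (hli : LinearIndependent ℝ ![α X X, α X Z])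
    (S J : V →ₗ[ℝ] V) (hJX : J X = Z) (hJZ : J Z = 0)
    (hS : α X (S Z) = α Z (S X)) :
    ∃ θ φ : ℝ, S = θ • LinearMap.id + φ • J := by
  have hspan := hXZ.span_pair_eq_top_of_finrank_eq_two hdim
  obtain ⟨a, b, hSX⟩ := mem_span_pair.mp (hspan ▸ mem_top : S X ∈ span ℝ {X, Z})
  obtain ⟨c, d, hSZ⟩ := mem_span_pair.mp (hspan ▸ mem_top : S Z ∈ span ℝ {X, Z})
  rw [← hSX, ← hSZ] at hS
  obtain ⟨rfl, rfl⟩ := eq_zero_and_eq_of_apply_comm_of_isotropic α (hsymm Z X) hZZ hli hS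
  refine ⟨d, b, LinearMap.ext_on_range (v := ![X, Z]) (by rwa [Matrix.range_cons_cons_empty]) ?_⟩
  simp [Fin.forall_fin_two, ← hSX, ← hSZ, hJX, hJZ]
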